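/- The inverse type translation defined by α⁻¹ = α, (σ̲→τ)⁻¹ = σ̲⁻¹ → τ⁻¹, (⋂σ)⁻¹ = ⋂σ⁻¹, (¬σ̲)⁻¹ = σ̲⁻¹, (⋂κ)⁻¹ = ⋃κ⁻¹, (¬κ̲)⁻¹ = κ̲⁻¹ is a left inverse of the CPS type translation: (S*)⁻¹ = S, (T⁺)⁻¹ = T, and ⟦T⟧⁻¹ = T. Moreover it is antitone/monotone appropriately: τ₀ ≤ τ₁ implies τ₀⁻¹ ≤ τ₁⁻¹; κ₀ ≤ κ₁ implies κ₁⁻¹ ≤ κ₀⁻¹; σ₀ ≤ σ₁ implies σ₀⁻¹ ≤ σ₁⁻¹. -/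

import Mathlib

/-! ## Union-intersection types -/

mutual
/-- Raw types `R ::= α | S → T`. -/
inductive RawTy : Type
  | atom : ℕ → RawTy
  | arrow : STy → TTy → RawTy
/-- Subsidiary types: finite formal intersections of raw types
    (the empty intersection is ω). -/
inductive STy : Type
  | inter : List RawTy → STy
/-- Types: finite formal unions of subsidiary types
    (the empty union is Ʊ). -/
inductive TTy : Type
  | union : List STy → TTy
end

/-- A subsidiary type regarded as a type (a singleton union). -/
def STy.toT (S : STy) : TTy := .union [S]
/-- A raw type regarded as a subsidiary type (a singleton intersection). -/
def RawTy.toS (R : RawTy) : STy := .inter [R]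

/-- ω, the empty intersection. -/
def STy.omega : STy := .inter []
/-- Ʊ, the empty union. -/
def TTy.agemo : TTy := .union []

mutual
/-- The subtype relation on raw types. -/
inductive SubR : RawTy → RawTy → Prop
  | atom (a : ℕ) : SubR (.atom a) (.atom a)
  | arrow {S S' T T'} : SubS S' S → SubT T T' → SubR (.arrow S T) (.arrow S' T')
/-- The subtype relation on subsidiary types.  Intersections are taken up to
    associativity and commutativity; `weaken` is the projection rule
    `S ≤ S' ⟹ S ∩ S'' ≤ S'` and `pair` the pairing rule. -/
inductive SubS : STy → STy → Prop
  | ofRaw {R R'} : SubR R R' → SubS (.inter [R]) (.inter [R'])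
  | weaken {l l' : List RawTy} {S'} : SubS (.inter l) S' → l.Subperm l' →
      SubS (.inter l') S'
  | pair {S} {l' : List RawTy} : (∀ R' ∈ l', SubS S (.inter [R'])) →
      SubS S (.inter l')
/-- The subtype relation on types.  `widen` is the injection rule
    `T ≤ T' ⟹ T ≤ T'' ∪ T'` and `copair` the copairing rule. -/
inductive SubT : TTy → TTy → Prop
  | ofS {S S'} : SubS S S' → SubT (.union [S]) (.union [S'])
  | widen {T} {l l' : List STy} : SubT T (.union l) → l.Subperm l' →
      SubT T (.union l')
  | copair {l : List STy} {T} : (∀ S ∈ l, SubT (.union [S]) T) →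
      SubT (.union l) T
end

/-! ## Target strict types: σ ::= α | σ̲ → τ, κ ::= ¬σ̲, τ ::= ¬κ̲ -/

mutual
/-- Strict types σ of the target calculus: `arrow s t` is σ̲ → τ where σ̲ = ⋂σ. -/
inductive Sig : Type
  | atom : ℕ → Sig
  | arrow : List Sig → Tau → Sig
/-- Strict types τ = ¬κ̲ of the target calculus, where κ̲ = ⋂κ and each κ = ¬σ̲
    is represented by its underlying intersection σ̲ (a list of σ's). -/
inductive Tau : Type
  | neg : List (List Sig) → Tau
end

/-- A continuation type κ = ¬σ̲ is represented by the list σ̲. -/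
abbrev Kap := List Sig
/-- An intersection σ̲ = ⋂σ. -/
abbrev SigU := List Sig
/-- An intersection κ̲ = ⋂κ. -/
abbrev KapU := List Kap

mutual
/-- Target subtyping on strict types σ. -/
inductive SubSig : Sig → Sig → Prop
  | atom (a : ℕ) : SubSig (.atom a) (.atom a)
  | arrow {s s' : SigU} {t t' : Tau} :
      SubSigU s' s → SubTau t t' → SubSig (.arrow s t) (.arrow s' t')
/-- Target subtyping on intersections σ̲ (projection/pairing, up to
    associativity and commutativity). -/
inductive SubSigU : SigU → SigU → Prop
  | intro {l l' : SigU} (f : Fin l'.length → Fin l.length)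
      (h : ∀ j : Fin l'.length, SubSig (l.get (f j)) (l'.get j)) :
      SubSigU l l'
/-- Target subtyping on continuation types κ = ¬σ̲ (contravariant in σ̲). -/
inductive SubKap : Kap → Kap → Prop
  | neg {s s' : SigU} : SubSigU s' s → SubKap s s'
/-- Target subtyping on intersections κ̲. -/
inductive SubKapU : KapU → KapU → Prop
  | intro {l l' : KapU} (f : Fin l'.length → Fin l.length)
      (h : ∀ j : Fin l'.length, SubKap (l.get (f j)) (l'.get j)) :
      SubKapU l l'
/-- Target subtyping on strict types τ = ¬κ̲ (contravariant in κ̲). -/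
inductive SubTau : Tau → Tau → Prop
  | neg {k k' : KapU} : SubKapU k' k → SubTau (.neg k) (.neg k')
end

/-! ## The CPS translation of types -/

mutual
/-- R* of a raw type. -/
def starR : RawTy → Sig
  | .atom a => .atom a
  | .arrow S T => .arrow (starS S) (cpsT T)
/-- S* = ⋂R* of a subsidiary type. -/
def starS : STy → SigU
  | .inter l => starRList l
def starRList : List RawTy → SigU
  | [] => []
  | R :: l => starR R :: starRList l
/-- T⁺ = ⋂¬S* of a type ⋃S (each ¬S* is the κ represented by S*). -/
def plusT : TTy → KapU
  | .union l => plusSList l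
def plusSList : List STy → KapU
  | [] => []
  | S :: l => starS S :: plusSList l
/-- ⟦T⟧ = ¬T⁺. -/
def cpsT : TTy → Tau
  | T => .neg (plusT T)
end

mutual
/-- The inverse translation σ⁻¹ of a strict type σ (a raw type). -/
def invSig : Sig → RawTy
  | .atom a => .atom a
  | .arrow s t => .arrow (invSigU s) (invTau t)
/-- σ̲⁻¹ = ⋂σ⁻¹ (a subsidiary type). -/
def invSigU : SigU → STy
  | l => .inter (invSigList l)
def invSigList : List Sig → List RawTy
  | [] => []
  | σ :: l => invSig σ :: invSigList l
/-- κ⁻¹ = (¬σ̲)⁻¹ = σ̲⁻¹ (a subsidiary type). -/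
def invKap : Kap → STy
  | s => invSigU s
/-- κ̲⁻¹ = ⋃κ⁻¹ (a type). -/
def invKapU : KapU → TTy
  | l => .union (invKapList l)
def invKapList : KapU → List STy
  | [] => []
  | κ :: l => invKap κ :: invKapList l
/-- τ⁻¹ = (¬κ̲)⁻¹ = κ̲⁻¹ (a type). -/
def invTau : Tau → TTy
  | .neg k => invKapU k
end

/-!
The inverse translation undoes the CPS translation layer by layer, so it is a left inverse by a
mutual structural induction. For monotonicity, a target subtyping of intersections `l ≤ l'` is
witnessed by a map `f` choosing, for each component `l'[j]`, a smaller component `l[f j]`; under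
the inverse translation this becomes a projection onto `l[f j]⁻¹` followed by pairing. An
intersection `κ̲` is sent to a union, so there the same witness gives an injection followed by
copairing, and the two negations in `τ = ¬κ̲`, `κ = ¬σ̲` restore covariance.
-/

theorem invSigList_eq_map (l : List Sig) : invSigList l = l.map invSig := by
  induction l with
  | nil => rw [invSigList, List.map_nil]
  | cons σ l ih => simp only [invSigList, ih, List.map_cons]

theorem invKapList_eq_map (l : KapU) : invKapList l = l.map invKap := by
  induction l with
  | nil => rw [invKapList, List.map_nil]
  | cons κ l ih => simp only [invKapList, ih, List.map_cons]

theorem SubS.of_mem {R R' : RawTy} {l : List RawTy} (hR : R ∈ l) (h : SubR R R') :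
    SubS (.inter l) (.inter [R']) :=
  .weaken (.ofRaw h) (List.singleton_subperm_iff.2 hR)

theorem SubT.of_mem {S S' : STy} {l : List STy} (hS : S ∈ l) (h : SubS S' S) :
    SubT (.union [S']) (.union l) :=
  .widen (.ofS h) (List.singleton_subperm_iff.2 hS)

mutual
theorem invSig_starR : ∀ R : RawTy, invSig (starR R) = R
  | .atom _ => by rw [starR, invSig]
  | .arrow S T => by rw [starR, invSig, invSigU_starS S, invTau_cpsT T]
theorem invSigList_starRList : ∀ l : List RawTy, invSigList (starRList l) = l
  | [] => by rw [starRList, invSigList]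
  | R :: l => by rw [starRList, invSigList, invSig_starR R, invSigList_starRList l]
theorem invSigU_starS : ∀ S : STy, invSigU (starS S) = S
  | .inter l => by rw [starS, invSigU, invSigList_starRList l]
theorem invKapList_plusSList : ∀ l : List STy, invKapList (plusSList l) = l
  | [] => by rw [plusSList, invKapList]
  | S :: l => by rw [plusSList, invKapList, invKap, invSigU_starS S, invKapList_plusSList l]
theorem invKapU_plusT : ∀ T : TTy, invKapU (plusT T) = T
  | .union l => by rw [plusT, invKapU, invKapList_plusSList l]
theorem invTau_cpsT : ∀ T : TTy, invTau (cpsT T) = T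
  | T => by rw [cpsT, invTau, invKapU_plusT T]
end

mutual
theorem SubSig.inv {σ₀ σ₁ : Sig} : SubSig σ₀ σ₁ → SubR (invSig σ₀) (invSig σ₁)
  | .atom a => by rw [invSig]; exact .atom a
  | .arrow hs ht => by rw [invSig, invSig]; exact .arrow hs.inv ht.inv
theorem SubSigU.inv {s₀ s₁ : SigU} : SubSigU s₀ s₁ → SubS (invSigU s₀) (invSigU s₁)
  | .intro f h => by
    rw [invSigU, invSigU, invSigList_eq_map, invSigList_eq_map]
    refine .pair (List.forall_mem_map.2 fun _ hσ' => ?_)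
    obtain ⟨j, rfl⟩ := List.mem_iff_get.1 hσ'
    exact SubS.of_mem (List.mem_map_of_mem (List.get_mem _ (f j))) (h j).inv
theorem SubKap.inv {κ₀ κ₁ : Kap} : SubKap κ₀ κ₁ → SubS (invKap κ₁) (invKap κ₀)
  | .neg hs => by rw [invKap, invKap]; exact hs.inv
theorem SubKapU.inv {k₀ k₁ : KapU} : SubKapU k₀ k₁ → SubT (invKapU k₁) (invKapU k₀)
  | .intro f h => by
    rw [invKapU, invKapU, invKapList_eq_map, invKapList_eq_map]
    refine .copair (List.forall_mem_map.2 fun _ hκ' => ?_)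
    obtain ⟨j, rfl⟩ := List.mem_iff_get.1 hκ'
    exact SubT.of_mem (List.mem_map_of_mem (List.get_mem _ (f j))) (h j).inv
theorem SubTau.inv {τ₀ τ₁ : Tau} : SubTau τ₀ τ₁ → SubT (invTau τ₀) (invTau τ₁)
  | .neg hk => by rw [invTau, invTau]; exact hk.inv
end

/-- The inverse type translation is a left inverse of the
CPS type translation, and it is monotone/antitone as appropriate. -/
theorem inverse_type_translation :
    (∀ S : STy, invSigU (starS S) = S) ∧
    (∀ T : TTy, invKapU (plusT T) = T) ∧
    (∀ T : TTy, invTau (cpsT T) = T) ∧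
    (∀ τ₀ τ₁ : Tau, SubTau τ₀ τ₁ → SubT (invTau τ₀) (invTau τ₁)) ∧
    (∀ κ₀ κ₁ : Kap, SubKap κ₀ κ₁ → SubS (invKap κ₁) (invKap κ₀)) ∧
    (∀ σ₀ σ₁ : Sig, SubSig σ₀ σ₁ → SubR (invSig σ₀) (invSig σ₁)) :=
  ⟨invSigU_starS, invKapU_plusT, invTau_cpsT, fun _ _ => SubTau.inv, fun _ _ => SubKap.inv,
    fun _ _ => SubSig.inv⟩
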